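/- Let k be odd, n = 2k+1, σ ∈ S_{n+1} with σ(t) = n+1 for some t ∈ [n]. Define f^σ on subsets of [n] by: f^σ(X) = σ(X) if |X| even and t ∉ X; f^σ(X) = [n] \ σ(X \ {t}) if |X| even and t ∈ X; f^σ(X) = [n] \ σ(X ∪ {n+1}) if |X| odd and t ∉ X; f^σ(X) = σ((X ∪ {n+1}) \ {t}) if |X| odd and t ∈ X. Then for all X, Y ⊆ [n], |X △ Y| = k if and only if |f^σ(X) △ f^σ(Y)| = k; i.e., f^σ is an automorphism of H(2k+1, k). -/

import Mathlib

open Finset symmDiff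

/-- The graph `H(n,k)` on subsets of `[n]`: `X ~ Y` iff `|X ∆ Y| = k`. -/
def HGraph (n k : ℕ) : SimpleGraph (Finset (Fin n)) where
  Adj X Y := (X ∆ Y).card = k ∧ X ≠ Y
  symm := by
    constructor
    intro X Y h
    exact ⟨by rw [symmDiff_comm]; exact h.1, h.2.symm⟩
  loopless := ⟨fun X h => h.2 rfl⟩

/-- For `σ ∈ S_{n+1}`, the four-case map `f^σ` on subsets of `[n]`:
`f^σ(X) = σ(X)` if `|X|` even and `t ∉ X`; `= [n] \ σ(X \ {t})` if `|X|` even and `t ∈ X`;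
`= [n] \ σ(X ∪ {n+1})` if `|X|` odd and `t ∉ X`; `= σ((X ∪ {n+1}) \ {t})` if `|X|` odd and
`t ∈ X`, where `t = σ⁻¹(n+1)`; and `f^σ = σ` when `σ(n+1) = n+1`.  Here `[n+1]` is
modelled by `Fin (n+1)` with `n+1` corresponding to `Fin.last n`, and `t ∈ X` is
equivalent to `Fin.last n ∈ σ(X)`. -/
def gperm (n : ℕ) (σ : Equiv.Perm (Fin (n + 1))) (X : Finset (Fin n)) : Finset (Fin n) :=
  let Y := X.image (fun i => σ (Fin.castSucc i))
  if σ (Fin.last n) = Fin.last n then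
    Finset.univ.filter (fun i => Fin.castSucc i ∈ Y)
  else if Even X.card then
    (if Fin.last n ∈ Y then Finset.univ.filter (fun i => Fin.castSucc i ∉ Y)
     else Finset.univ.filter (fun i => Fin.castSucc i ∈ Y))
  else
    (if Fin.last n ∈ Y then
      Finset.univ.filter (fun i => Fin.castSucc i ∈ insert (σ (Fin.last n)) Y)
     else Finset.univ.filter (fun i => Fin.castSucc i ∉ insert (σ (Fin.last n)) Y))

/-! Lift `X ⊆ [n]` to the unique even-size set `L(X) ⊆ [n+1]` restricting to `X`. Then `f^σ(X)`
is the restriction of `σ(L(X))` to `[n]`, complemented unless `t ∈ X ↔ |X|` odd. Since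
`|L(X) ∆ L(Y)|` is `m = |X ∆ Y|` rounded up to an even number and `σ` preserves it, tracking whether
`n+1 = σ(t)` lies in `σ(L(X) ∆ L(Y))` shows that `|f^σ(X) ∆ f^σ(Y)|` is `m`, `n - 1 - m` (`m` odd)
or `n + 1 - m` (`m` even). For `n = 2k + 1` with `k` odd each of these equals `k` exactly when
`m = k`.
-/

theorem symmDiff_compl_left {α : Type*} [BooleanAlgebra α] (a b : α) : aᶜ ∆ b = (a ∆ b)ᶜ := by
  simp only [← hnot_eq_compl, ← symmDiff_top, symmDiff_right_comm]

theorem symmDiff_compl_right {α : Type*} [BooleanAlgebra α] (a b : α) : a ∆ bᶜ = (a ∆ b)ᶜ := by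
  rw [symmDiff_comm, symmDiff_compl_left, symmDiff_comm]

theorem ite_compl_symmDiff_ite_compl {α : Type*} [BooleanAlgebra α] (p q : Prop) [Decidable p]
    [Decidable q] (a b : α) :
    (if p then a else aᶜ) ∆ (if q then b else bᶜ) = if (p ↔ q) then a ∆ b else (a ∆ b)ᶜ := by
  by_cases hp : p <;> by_cases hq : q <;>
    simp [hp, hq, symmDiff_compl_left, symmDiff_compl_right]

theorem card_symmDiff_add_two_mul_card_inter {α : Type*} [DecidableEq α] (s t : Finset α) :
    #(s ∆ t) + 2 * #(s ∩ t) = #s + #t := by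
  rw [Finset.symmDiff_def, card_union_of_disjoint disjoint_sdiff_sdiff]
  have hs := card_sdiff_add_card_inter s t
  have ht := card_sdiff_add_card_inter t s
  rw [inter_comm] at ht
  omega

theorem odd_card_symmDiff_iff {α : Type*} [DecidableEq α] (s t : Finset α) :
    Odd #(s ∆ t) ↔ ¬(Odd #s ↔ Odd #t) := by
  have := card_symmDiff_add_two_mul_card_inter s t
  simp only [Nat.odd_iff]
  omega

namespace Fin

variable {n : ℕ}

def dropLast (Z : Finset (Fin (n + 1))) : Finset (Fin n) :=
  univ.filter (fun i => castSucc i ∈ Z)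

@[simp]
theorem mem_dropLast {Z : Finset (Fin (n + 1))} {i : Fin n} :
    i ∈ dropLast Z ↔ castSucc i ∈ Z := by
  simp [dropLast]

theorem dropLast_symmDiff (Z W : Finset (Fin (n + 1))) :
    dropLast (Z ∆ W) = dropLast Z ∆ dropLast W := by
  ext i
  simp [mem_symmDiff]

theorem card_dropLast_add (Z : Finset (Fin (n + 1))) :
    #(dropLast Z) + (if last n ∈ Z then 1 else 0) = #Z := by
  rw [dropLast, card_filter, ← sum_univ_castSucc (f := fun i => if i ∈ Z then 1 else 0)]
  simp

def evenLift (X : Finset (Fin n)) : Finset (Fin (n + 1)) :=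
  if Odd #X then insert (last n) (X.image castSucc) else X.image castSucc

@[simp]
theorem castSucc_mem_evenLift {X : Finset (Fin n)} {i : Fin n} :
    castSucc i ∈ evenLift X ↔ i ∈ X := by
  unfold evenLift
  split_ifs <;> simp [(castSucc_lt_last i).ne]

@[simp]
theorem last_mem_evenLift {X : Finset (Fin n)} : last n ∈ evenLift X ↔ Odd #X := by
  unfold evenLift
  split_ifs with h <;> simp [h]

@[simp]
theorem dropLast_evenLift (X : Finset (Fin n)) : dropLast (evenLift X) = X := by
  ext i
  simp

theorem card_evenLift_symmDiff (X Y : Finset (Fin n)) :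
    #(evenLift X ∆ evenLift Y) = #(X ∆ Y) + if Odd #(X ∆ Y) then 1 else 0 := by
  rw [← card_dropLast_add, dropLast_symmDiff, dropLast_evenLift, dropLast_evenLift]
  simp only [mem_symmDiff, last_mem_evenLift, odd_card_symmDiff_iff]
  congr 2
  exact propext (by tauto)

end Fin

section

open Fin

variable {n : ℕ} {σ : Equiv.Perm (Fin (n + 1))} {t : Fin n}

theorem last_mem_image_iff (ht : σ (castSucc t) = last n) (A : Finset (Fin (n + 1))) :
    last n ∈ A.image σ ↔ castSucc t ∈ A := by
  rw [← ht, σ.injective.mem_finset_image]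

theorem gperm_eq_ite (ht : σ (castSucc t) = last n) (X : Finset (Fin n)) :
    gperm n σ X = if (t ∈ X ↔ Odd #X) then dropLast ((evenLift X).image σ)
      else (dropLast ((evenLift X).image σ))ᶜ := by
  have hσ : σ (last n) ≠ last n := fun h =>
    (castSucc_lt_last t).ne (σ.injective (ht.trans h.symm))
  have hY : X.image (fun i => σ (castSucc i)) = (X.image castSucc).image σ := image_image.symm
  have hlast : last n ∈ (X.image castSucc).image σ ↔ t ∈ X := by
    simp [last_mem_image_iff ht]
  unfold gperm
  by_cases ho : Odd #X <;> by_cases htX : t ∈ X <;>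
    simp [← Nat.not_odd_iff_even, hσ, ho, htX, hY, hlast, evenLift, dropLast, compl_filter]

theorem card_dropLast_image_evenLift_symmDiff (ht : σ (castSucc t) = last n)
    (X Y : Finset (Fin n)) :
    #(dropLast ((evenLift X).image σ) ∆ dropLast ((evenLift Y).image σ))
      + (if t ∈ X ∆ Y then 1 else 0) = #(X ∆ Y) + if Odd #(X ∆ Y) then 1 else 0 := by
  have hlast : last n ∈ (evenLift X ∆ evenLift Y).image σ ↔ t ∈ X ∆ Y := by
    simp [last_mem_image_iff ht, mem_symmDiff]
  rw [← dropLast_symmDiff, ← image_symmDiff _ _ σ.injective, ← card_evenLift_symmDiff,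
    ← card_image_of_injective _ σ.injective, ← card_dropLast_add]
  simp only [hlast]

theorem card_gperm_symmDiff (ht : σ (castSucc t) = last n) (X Y : Finset (Fin n)) :
    #(gperm n σ X ∆ gperm n σ Y) =
      if (t ∈ X ∆ Y ↔ Odd #(X ∆ Y)) then #(X ∆ Y)
      else if Odd #(X ∆ Y) then n - (#(X ∆ Y) + 1) else n + 1 - #(X ∆ Y) := by
  have hcard := card_dropLast_image_evenLift_symmDiff ht X Y
  have hflags : ((t ∈ X ↔ Odd #X) ↔ (t ∈ Y ↔ Odd #Y)) ↔ (t ∈ X ∆ Y ↔ Odd #(X ∆ Y)) := by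
    rw [mem_symmDiff, odd_card_symmDiff_iff]
    tauto
  rw [gperm_eq_ite ht X, gperm_eq_ite ht Y, ite_compl_symmDiff_ite_compl]
  rw [apply_ite card, card_compl, Fintype.card_fin]
  simp only [hflags]
  by_cases ha : t ∈ X ∆ Y <;> by_cases ho : Odd #(X ∆ Y) <;> simp [ha, ho] at hcard ⊢ <;> omega

end

/-- For `k` odd, `n = 2k + 1`, and `σ ∈ S_{n+1}` with `σ(t) = n+1` for some `t ∈ [n]`:
for all `X, Y ⊆ [n]`, `|X ∆ Y| = k` iff `|f^σ(X) ∆ f^σ(Y)| = k`; i.e. `f^σ` is an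
automorphism of `H(2k+1,k)`. -/
theorem stmt_13 (k n : ℕ) (hk : Odd k) (hn : n = 2 * k + 1)
    (σ : Equiv.Perm (Fin (n + 1))) (t : Fin n) (ht : σ (Fin.castSucc t) = Fin.last n) :
    ∀ X Y : Finset (Fin n),
      (X ∆ Y).card = k ↔ (gperm n σ X ∆ gperm n σ Y).card = k := by
  intro X Y
  have hle : #(X ∆ Y) ≤ n := card_le_univ _ |>.trans_eq (Fintype.card_fin n)
  rw [card_gperm_symmDiff ht]
  split_ifs <;> simp only [Nat.odd_iff] at * <;> omega
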